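/- arXiv:2305.12274 — 8 statements merged into one kernel-verified Lean document; each statement's English description precedes it below -/
import Mathlib

section
/- With λ* := (Σ_{i=1}^{k*} δᵢ - y)/k*, where k* is the largest k ∈ {1,...,n} with Σ_{i=1}^k (δᵢ - δ_k) < y, we have δ_{k*} > λ* and (if k* < n) δ_{k*+1} ≤ λ*. Consequently the number of indices i with δᵢ > λ* equals k* (using that δ is nonincreasing). -/
open Finset

theorem div_lt_iff_sum_Icc_sub_lt (δ : ℕ → ℝ) {k : ℕ} (hk : 0 < k) (y c : ℝ) :
    (∑ i ∈ Icc 1 k, δ i - y) / k < c ↔ ∑ i ∈ Icc 1 k, (δ i - c) < y := by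
  rw [sum_sub_distrib, sum_const, Nat.card_Icc, Nat.add_sub_cancel, nsmul_eq_mul,
    div_lt_iff₀ (by exact_mod_cast hk)]
  constructor <;> intro h <;> linarith

theorem sum_Icc_succ_sub_self (δ : ℕ → ℝ) (k : ℕ) :
    ∑ i ∈ Icc 1 (k + 1), (δ i - δ (k + 1)) = ∑ i ∈ Icc 1 k, (δ i - δ (k + 1)) := by
  rw [sum_Icc_succ_top (by omega), sub_self, add_zero]

theorem filter_Icc_lt_eq_Icc_of_antitone {n k : ℕ} {δ : ℕ → ℝ} {l : ℝ}
    (hδ : ∀ i j, 1 ≤ i → i ≤ j → j ≤ n → δ j ≤ δ i) (hkn : k ≤ n)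
    (hlt : l < δ k) (hle : k < n → δ (k + 1) ≤ l) :
    (Icc 1 n).filter (fun i => l < δ i) = Icc 1 k := by
  ext i
  simp only [mem_filter, mem_Icc]
  constructor
  · rintro ⟨⟨hi1, hin⟩, hli⟩
    refine ⟨hi1, not_lt.mp fun hki => hli.not_ge ?_⟩
    exact (hδ (k + 1) i (by omega) hki hin).trans (hle (by omega))
  · rintro ⟨hi1, hik⟩
    exact ⟨⟨hi1, hik.trans hkn⟩, hlt.trans_le (hδ i k hi1 hik hkn)⟩

theorem stmt1_general (n : ℕ) (y : ℝ) (δ : ℕ → ℝ)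
    (hδ : ∀ i j, 1 ≤ i → i ≤ j → j ≤ n → δ j ≤ δ i)
    (kstar : ℕ)
    (hk : (kstar ∈ Finset.Icc 1 n ∧ ∑ i ∈ Finset.Icc 1 kstar, (δ i - δ kstar) < y) ∧
      ∀ j, (j ∈ Finset.Icc 1 n ∧ ∑ i ∈ Finset.Icc 1 j, (δ i - δ j) < y) → j ≤ kstar)
    (lstar : ℝ) (hl : lstar = ((∑ i ∈ Finset.Icc 1 kstar, δ i) - y) / kstar) :
    lstar < δ kstar ∧ (kstar < n → δ (kstar + 1) ≤ lstar) ∧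
    ((Finset.Icc 1 n).filter (fun i => lstar < δ i)).card = kstar := by
  obtain ⟨⟨hkmem, hksum⟩, hkmax⟩ := hk
  obtain ⟨hk1, hkn⟩ := mem_Icc.mp hkmem
  subst hl
  have hlt := (div_lt_iff_sum_Icc_sub_lt δ hk1 y (δ kstar)).mpr hksum
  -- `k* + 1` fails the defining condition of `k*`, and its own term in that sum vanishes.
  have hle : kstar < n → δ (kstar + 1) ≤ (∑ i ∈ Icc 1 kstar, δ i - y) / kstar := by
    intro hkn'
    rw [← not_lt, div_lt_iff_sum_Icc_sub_lt δ hk1, ← sum_Icc_succ_sub_self]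
    exact fun h => absurd (hkmax (kstar + 1) ⟨mem_Icc.mpr ⟨by omega, hkn'⟩, h⟩) (by omega)
  refine ⟨hlt, hle, ?_⟩
  rw [filter_Icc_lt_eq_Icc_of_antitone hδ hkn hlt hle, Nat.card_Icc, Nat.add_sub_cancel]

/-- With `λ* = (∑_{i=1}^{k*} δᵢ - y)/k*` where `k*` is the largest
`k ∈ {1,...,n}` with `∑_{i=1}^k (δᵢ - δ_k) < y`, we have `δ_{k*} > λ*`, and if `k* < n`
then `δ_{k*+1} ≤ λ*`; consequently the number of indices `i ∈ {1,...,n}` with `δᵢ > λ*`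
equals `k*`. -/
theorem stmt1 (n : ℕ) (hn : 1 ≤ n) (y : ℝ) (hy : 0 < y) (δ : ℕ → ℝ)
    (hδ : ∀ i j, 1 ≤ i → i ≤ j → j ≤ n → δ j ≤ δ i)
    (kstar : ℕ)
    (hk : (kstar ∈ Finset.Icc 1 n ∧ ∑ i ∈ Finset.Icc 1 kstar, (δ i - δ kstar) < y) ∧
      ∀ j, (j ∈ Finset.Icc 1 n ∧ ∑ i ∈ Finset.Icc 1 j, (δ i - δ j) < y) → j ≤ kstar)
    (lstar : ℝ) (hl : lstar = ((∑ i ∈ Finset.Icc 1 kstar, δ i) - y) / kstar) :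
    lstar < δ kstar ∧ (kstar < n → δ (kstar + 1) ≤ lstar) ∧
    ((Finset.Icc 1 n).filter (fun i => lstar < δ i)).card = kstar :=
  stmt1_general n y δ hδ kstar hk lstar hl
end

section
/- The vector y* with yᵢ* = max(δᵢ - λ*, 0) is the unique minimizer of Σ_{i=1}^n (yᵢ - δᵢ)² over all vectors (y₁,...,yₙ) with yᵢ ≥ 0 for all i and Σ_{i=1}^n yᵢ = y. -/
/-!
Write `l = λ*`. For any `z ≥ 0` the clipped vector `y* = max (δ - l) 0` satisfies
`(z i - y* i) (y* i - δ i) ≥ -l (z i - y* i)` termwise (with equality where `δ i ≥ l`,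
and because `z i ≥ 0 ≥ δ i - l` elsewhere), so for `∑ z = ∑ y*` the cross term of
`‖z - δ‖² = ‖y* - δ‖² + ‖z - y*‖² + 2 ⟪z - y*, y* - δ⟫` is nonnegative. This gives minimality
and uniqueness at once. It remains to see that `∑ y* = y`: the choice of `k*` forces
`l < δ i` for `i ≤ k*` and `δ i ≤ l` for `i > k*`, so `∑ y* = ∑_{i ≤ k*} δ i - k* l = y`.
-/

open Finset

lemma neg_mul_sub_le_sub_max_mul (d l : ℝ) {z : ℝ} (hz : 0 ≤ z) :
    -l * (z - max (d - l) 0) ≤ (z - max (d - l) 0) * (max (d - l) 0 - d) := by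
  rcases le_total l d with h | h
  · rw [max_eq_left (sub_nonneg.mpr h)]
    linarith
  · rw [max_eq_right (sub_nonpos.mpr h)]
    nlinarith

section Minimizer

variable {ι : Type*} (s : Finset ι) (δ : ι → ℝ) {z : ι → ℝ} (l : ℝ)

lemma sum_sq_sub_max_add_sum_sq_le (hz : ∀ i ∈ s, 0 ≤ z i)
    (hsum : ∑ i ∈ s, z i = ∑ i ∈ s, max (δ i - l) 0) :
    ∑ i ∈ s, (max (δ i - l) 0 - δ i) ^ 2 + ∑ i ∈ s, (z i - max (δ i - l) 0) ^ 2 ≤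
      ∑ i ∈ s, (z i - δ i) ^ 2 := by
  set p : ι → ℝ := fun i ↦ max (δ i - l) 0
  have hcross : 0 ≤ ∑ i ∈ s, (z i - p i) * (p i - δ i) :=
    calc (0 : ℝ) = ∑ i ∈ s, -l * (z i - p i) := by
          rw [← mul_sum, sum_sub_distrib, hsum, sub_self, mul_zero]
      _ ≤ ∑ i ∈ s, (z i - p i) * (p i - δ i) :=
          sum_le_sum fun i hi ↦ neg_mul_sub_le_sub_max_mul (δ i) l (hz i hi)
  have hexpand : ∑ i ∈ s, (z i - δ i) ^ 2 = ∑ i ∈ s, (p i - δ i) ^ 2 + ∑ i ∈ s, (z i - p i) ^ 2 +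
      2 * ∑ i ∈ s, (z i - p i) * (p i - δ i) := by
    rw [mul_sum, ← sum_add_distrib, ← sum_add_distrib]
    exact sum_congr rfl fun i _ ↦ by ring
  linarith

lemma sum_sq_max_sub_le (hz : ∀ i ∈ s, 0 ≤ z i)
    (hsum : ∑ i ∈ s, z i = ∑ i ∈ s, max (δ i - l) 0) :
    ∑ i ∈ s, (max (δ i - l) 0 - δ i) ^ 2 ≤ ∑ i ∈ s, (z i - δ i) ^ 2 := by
  have := sum_sq_sub_max_add_sum_sq_le s δ l hz hsum
  linarith [sum_nonneg fun i (_ : i ∈ s) ↦ sq_nonneg (z i - max (δ i - l) 0)]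

lemma eq_max_sub_of_sum_sq_eq (hz : ∀ i ∈ s, 0 ≤ z i)
    (hsum : ∑ i ∈ s, z i = ∑ i ∈ s, max (δ i - l) 0)
    (heq : ∑ i ∈ s, (z i - δ i) ^ 2 = ∑ i ∈ s, (max (δ i - l) 0 - δ i) ^ 2) :
    ∀ i ∈ s, z i = max (δ i - l) 0 := by
  have hzero : ∑ i ∈ s, (z i - max (δ i - l) 0) ^ 2 = 0 :=
    le_antisymm (by linarith [sum_sq_sub_max_add_sum_sq_le s δ l hz hsum])
      (sum_nonneg fun i _ ↦ sq_nonneg _)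
  intro i hi
  exact sub_eq_zero.mp (pow_eq_zero_iff two_ne_zero |>.mp
    ((sum_eq_zero_iff_of_nonneg fun j _ ↦ sq_nonneg _).mp hzero i hi))

end Minimizer

lemma sum_Icc_sub_lt_iff (δ : ℕ → ℝ) (y c : ℝ) {k : ℕ} (hk : 0 < k) :
    ∑ i ∈ Icc 1 k, (δ i - c) < y ↔ (∑ i ∈ Icc 1 k, δ i - y) / k < c := by
  rw [sum_sub_distrib, sum_const, Nat.card_Icc, nsmul_eq_mul, div_lt_iff₀ (by positivity)]
  simp only [add_tsub_cancel_right]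
  constructor <;> intro h <;> linarith

lemma sum_Icc_max_sub_eq (δ : ℕ → ℝ) (l : ℝ) {k n : ℕ} (hkn : k ≤ n)
    (hlow : ∀ i ∈ Icc 1 k, l ≤ δ i) (hhigh : ∀ i ∈ Ioc k n, δ i ≤ l) :
    ∑ i ∈ Icc 1 n, max (δ i - l) 0 = ∑ i ∈ Icc 1 k, δ i - k * l := by
  have hsplit : ∑ i ∈ Icc 1 n, max (δ i - l) 0 =
      ∑ i ∈ Icc 1 k, max (δ i - l) 0 + ∑ i ∈ Ioc k n, max (δ i - l) 0 := by
    have hIoc : ∀ m, Icc 1 m = Ioc 0 m := Icc_add_one_left_eq_Ioc 0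
    rw [hIoc, hIoc]
    exact (sum_Ioc_consecutive _ k.zero_le hkn).symm
  rw [hsplit, sum_congr rfl fun i hi ↦ max_eq_left (sub_nonneg.mpr (hlow i hi)),
    sum_congr rfl fun i hi ↦ max_eq_right (sub_nonpos.mpr (hhigh i hi)), sum_sub_distrib,
    sum_const, Nat.card_Icc, nsmul_eq_mul]
  simp

lemma sum_Icc_max_sub_div_eq (δ : ℕ → ℝ) (y : ℝ) {k n : ℕ}
    (hδ : ∀ i j, 1 ≤ i → i ≤ j → j ≤ n → δ j ≤ δ i) (hk1 : 1 ≤ k) (hkn : k ≤ n)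
    (hklt : ∑ i ∈ Icc 1 k, (δ i - δ k) < y)
    (hmax : ∀ j ∈ Icc 1 n, ∑ i ∈ Icc 1 j, (δ i - δ j) < y → j ≤ k) :
    ∑ i ∈ Icc 1 n, max (δ i - (∑ i ∈ Icc 1 k, δ i - y) / k) 0 = y := by
  set l := (∑ i ∈ Icc 1 k, δ i - y) / k with hl
  have hlow : ∀ i ∈ Icc 1 k, l ≤ δ i := fun i hi ↦
    ((sum_Icc_sub_lt_iff δ y _ hk1).mp hklt).le.trans
      (hδ i k (mem_Icc.mp hi).1 (mem_Icc.mp hi).2 hkn)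
  have hhigh : ∀ i ∈ Ioc k n, δ i ≤ l := by
    intro i hi
    obtain ⟨hki, hin⟩ := mem_Ioc.mp hi
    have hnext : ¬ ∑ j ∈ Icc 1 (k + 1), (δ j - δ (k + 1)) < y := fun h ↦
      k.lt_succ_self.not_ge (hmax _ (mem_Icc.mpr ⟨by omega, by omega⟩) h)
    -- the last summand vanishes, so this is the sum up to `k` with threshold `δ (k + 1)`
    rw [sum_Icc_succ_top (by omega), sub_self, add_zero, sum_Icc_sub_lt_iff δ y _ hk1,
      not_lt] at hnext
    exact (hδ (k + 1) i (by omega) hki hin).trans hnext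
  rw [sum_Icc_max_sub_eq δ l hkn hlow hhigh, hl]
  field_simp
  ring

theorem stmt3_general (n : ℕ) (y : ℝ) (δ : ℕ → ℝ)
    (hδ : ∀ i j, 1 ≤ i → i ≤ j → j ≤ n → δ j ≤ δ i)
    (kstar : ℕ)
    (hk : (kstar ∈ Finset.Icc 1 n ∧ ∑ i ∈ Finset.Icc 1 kstar, (δ i - δ kstar) < y) ∧
      ∀ j, (j ∈ Finset.Icc 1 n ∧ ∑ i ∈ Finset.Icc 1 j, (δ i - δ j) < y) → j ≤ kstar)
    (lstar : ℝ) (hl : lstar = ((∑ i ∈ Finset.Icc 1 kstar, δ i) - y) / kstar)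
    (ystar : ℕ → ℝ) (hystar : ∀ i, ystar i = max (δ i - lstar) 0) :
    ((∀ i ∈ Finset.Icc 1 n, 0 ≤ ystar i) ∧ ∑ i ∈ Finset.Icc 1 n, ystar i = y ∧
      ∀ z : ℕ → ℝ, (∀ i ∈ Finset.Icc 1 n, 0 ≤ z i) → ∑ i ∈ Finset.Icc 1 n, z i = y →
        ∑ i ∈ Finset.Icc 1 n, (ystar i - δ i) ^ 2 ≤ ∑ i ∈ Finset.Icc 1 n, (z i - δ i) ^ 2) ∧
    (∀ z : ℕ → ℝ, (∀ i ∈ Finset.Icc 1 n, 0 ≤ z i) → ∑ i ∈ Finset.Icc 1 n, z i = y →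
      ∑ i ∈ Finset.Icc 1 n, (z i - δ i) ^ 2 = ∑ i ∈ Finset.Icc 1 n, (ystar i - δ i) ^ 2 →
      ∀ i ∈ Finset.Icc 1 n, z i = ystar i) := by
  obtain ⟨⟨hkmem, hklt⟩, hkmax⟩ := hk
  obtain ⟨hk1, hkn⟩ := mem_Icc.mp hkmem
  obtain rfl : ystar = fun i ↦ max (δ i - lstar) 0 := funext hystar
  subst hl
  have hsum := sum_Icc_max_sub_div_eq δ y hδ hk1 hkn hklt fun j hj h ↦ hkmax j ⟨hj, h⟩
  exact ⟨⟨fun i _ ↦ le_max_right _ _, hsum, fun z hz hzsum ↦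
      sum_sq_max_sub_le _ δ _ hz (hzsum.trans hsum.symm)⟩,
    fun z hz hzsum ↦ eq_max_sub_of_sum_sq_eq _ δ _ hz (hzsum.trans hsum.symm)⟩

/-- The vector `yᵢ* = max(δᵢ - λ*, 0)` is the unique minimizer of
`∑_{i=1}^n (yᵢ - δᵢ)²` over all vectors with `yᵢ ≥ 0` and `∑ yᵢ = y`. -/
theorem stmt3 (n : ℕ) (hn : 1 ≤ n) (y : ℝ) (hy : 0 < y) (δ : ℕ → ℝ)
    (hδ : ∀ i j, 1 ≤ i → i ≤ j → j ≤ n → δ j ≤ δ i)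
    (kstar : ℕ)
    (hk : (kstar ∈ Finset.Icc 1 n ∧ ∑ i ∈ Finset.Icc 1 kstar, (δ i - δ kstar) < y) ∧
      ∀ j, (j ∈ Finset.Icc 1 n ∧ ∑ i ∈ Finset.Icc 1 j, (δ i - δ j) < y) → j ≤ kstar)
    (lstar : ℝ) (hl : lstar = ((∑ i ∈ Finset.Icc 1 kstar, δ i) - y) / kstar)
    (ystar : ℕ → ℝ) (hystar : ∀ i, ystar i = max (δ i - lstar) 0) :
    ((∀ i ∈ Finset.Icc 1 n, 0 ≤ ystar i) ∧ ∑ i ∈ Finset.Icc 1 n, ystar i = y ∧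
      ∀ z : ℕ → ℝ, (∀ i ∈ Finset.Icc 1 n, 0 ≤ z i) → ∑ i ∈ Finset.Icc 1 n, z i = y →
        ∑ i ∈ Finset.Icc 1 n, (ystar i - δ i) ^ 2 ≤ ∑ i ∈ Finset.Icc 1 n, (z i - δ i) ^ 2) ∧
    (∀ z : ℕ → ℝ, (∀ i ∈ Finset.Icc 1 n, 0 ≤ z i) → ∑ i ∈ Finset.Icc 1 n, z i = y →
      ∑ i ∈ Finset.Icc 1 n, (z i - δ i) ^ 2 = ∑ i ∈ Finset.Icc 1 n, (ystar i - δ i) ^ 2 →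
      ∀ i ∈ Finset.Icc 1 n, z i = ystar i) :=
  stmt3_general n y δ hδ kstar hk lstar hl ystar hystar
end

section
/- If y > Σ_{i=1}^n max(δᵢ, 0), then a nonnegative vector y* summing to y minimizes Σ_{i=1}^n |yᵢ* - δᵢ| if and only if yᵢ* = max(δᵢ, 0) + εᵢ for some εᵢ ≥ 0 with Σ_{i=1}^n εᵢ = y - Σ_{i=1}^n max(δᵢ, 0). -/
open Finset

/-!
Since `∑ |zᵢ - δᵢ| ≥ ∑ (zᵢ - δᵢ) = y - ∑ δᵢ` for every feasible `z`, with equality exactly when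
`δᵢ ≤ zᵢ` for all `i`, and since `y ≥ ∑ δᵢ⁺` makes that lower bound attainable, the minimizers
are the feasible vectors dominating `δ`. For nonnegative vectors this means dominating `δ⁺`, i.e.
`y* = δ⁺ + ε` with `ε ≥ 0` carrying the excess `y - ∑ δᵢ⁺`.
-/

section

variable {ι : Type*} {s : Finset ι}

theorem sum_abs_sub_eq_sum_sub_iff (z δ : ι → ℝ) :
    ∑ i ∈ s, |z i - δ i| = ∑ i ∈ s, (z i - δ i) ↔ ∀ i ∈ s, δ i ≤ z i := by
  rw [eq_comm, sum_eq_sum_iff_of_le fun i _ => le_abs_self _]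
  simp only [eq_comm (a := z _ - δ _), abs_eq_self, sub_nonneg]

theorem exists_ge_sum_eq {f : ι → ℝ} {y : ℝ} (hs : s.Nonempty) (hf : ∑ i ∈ s, f i ≤ y) :
    ∃ z : ι → ℝ, (∀ i ∈ s, f i ≤ z i) ∧ ∑ i ∈ s, z i = y := by
  have hcard : (0 : ℝ) < #s := by exact_mod_cast hs.card_pos
  refine ⟨fun i => f i + (y - ∑ j ∈ s, f j) / #s, fun i _ => ?_, ?_⟩
  · have : 0 ≤ (y - ∑ j ∈ s, f j) / #s := div_nonneg (sub_nonneg.2 hf) hcard.le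
    linarith
  · rw [sum_add_distrib, sum_const, nsmul_eq_mul, mul_div_cancel₀ _ hcard.ne']
    ring

theorem forall_sum_abs_sub_le_iff {δ x : ι → ℝ} {y : ℝ} (hx : ∑ i ∈ s, x i = y)
    (hfeas : ∃ z : ι → ℝ, (∀ i ∈ s, max (δ i) 0 ≤ z i) ∧ ∑ i ∈ s, z i = y) :
    (∀ z : ι → ℝ, (∀ i ∈ s, 0 ≤ z i) → ∑ i ∈ s, z i = y →
        ∑ i ∈ s, |x i - δ i| ≤ ∑ i ∈ s, |z i - δ i|) ↔ ∀ i ∈ s, δ i ≤ x i := by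
  constructor
  · intro hmin
    obtain ⟨z, hzδ, hz⟩ := hfeas
    have hz_abs := (sum_abs_sub_eq_sum_sub_iff z δ).2 fun i hi =>
      (le_max_left _ _).trans (hzδ i hi)
    have hx_le : ∑ i ∈ s, |x i - δ i| ≤ ∑ i ∈ s, (x i - δ i) := calc
      ∑ i ∈ s, |x i - δ i| ≤ ∑ i ∈ s, |z i - δ i| :=
        hmin z (fun i hi => (le_max_right _ _).trans (hzδ i hi)) hz
      _ = ∑ i ∈ s, (x i - δ i) := by rw [hz_abs, sum_sub_distrib, sum_sub_distrib, hz, hx]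
    exact (sum_abs_sub_eq_sum_sub_iff x δ).1
      (hx_le.antisymm (sum_le_sum fun i _ => le_abs_self _))
  · intro hxδ z _ hz
    rw [(sum_abs_sub_eq_sum_sub_iff x δ).2 hxδ, sum_sub_distrib, hx, ← hz, ← sum_sub_distrib]
    exact sum_le_sum fun i _ => le_abs_self _

theorem exists_nonneg_eq_add_iff {f x : ι → ℝ} {y : ℝ} (hx : ∑ i ∈ s, x i = y) :
    (∃ ε : ι → ℝ, (∀ i ∈ s, 0 ≤ ε i) ∧ ∑ i ∈ s, ε i = y - ∑ i ∈ s, f i ∧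
      ∀ i ∈ s, x i = f i + ε i) ↔ ∀ i ∈ s, f i ≤ x i := by
  constructor
  · rintro ⟨ε, hε, -, hxε⟩ i hi
    linarith [hε i hi, hxε i hi]
  · intro hfx
    refine ⟨x - f, fun i hi => sub_nonneg.2 (hfx i hi), ?_, fun i _ => by simp⟩
    simp only [Pi.sub_apply, sum_sub_distrib, hx]

end

/-- If `y > ∑ max(δᵢ,0)`, then a nonnegative vector `y*` summing to `y`
minimizes `∑ |yᵢ* - δᵢ|` iff `yᵢ* = max(δᵢ,0) + εᵢ` for some `εᵢ ≥ 0` summing to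
`y - ∑ max(δᵢ,0)`. -/
theorem stmt7 (n : ℕ) (y : ℝ) (hy : 0 < y) (δ : ℕ → ℝ)
    (h : ∑ i ∈ Finset.Icc 1 n, max (δ i) 0 < y)
    (ystar : ℕ → ℝ) (hpos : ∀ i ∈ Finset.Icc 1 n, 0 ≤ ystar i)
    (hsum : ∑ i ∈ Finset.Icc 1 n, ystar i = y) :
    (∀ z : ℕ → ℝ, (∀ i ∈ Finset.Icc 1 n, 0 ≤ z i) → ∑ i ∈ Finset.Icc 1 n, z i = y →
        ∑ i ∈ Finset.Icc 1 n, |ystar i - δ i| ≤ ∑ i ∈ Finset.Icc 1 n, |z i - δ i|) ↔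
    ∃ ε : ℕ → ℝ, (∀ i ∈ Finset.Icc 1 n, 0 ≤ ε i) ∧
      ∑ i ∈ Finset.Icc 1 n, ε i = y - ∑ i ∈ Finset.Icc 1 n, max (δ i) 0 ∧
      ∀ i ∈ Finset.Icc 1 n, ystar i = max (δ i) 0 + ε i := by
  have hne : (Icc 1 n).Nonempty := nonempty_of_sum_ne_zero (hsum ▸ hy.ne')
  rw [forall_sum_abs_sub_le_iff hsum (exists_ge_sum_eq hne h.le), exists_nonneg_eq_add_iff hsum]
  exact ⟨fun hδ i hi => max_le (hδ i hi) (hpos i hi),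
    fun hmax i hi => (le_max_left _ _).trans (hmax i hi)⟩
end

section
/- If 0 < y ≤ Σ_{i=1}^n max(δᵢ, 0), then the minimum value of Σ_{i=1}^n |yᵢ - δᵢ| over nonnegative vectors (y₁,...,yₙ) summing to y equals Σ_{i=1}^n |δᵢ| - y. -/
/-!
Since `|δᵢ| - zᵢ ≤ |zᵢ - δᵢ|` for `zᵢ ≥ 0`, summing gives the lower bound `∑ |δᵢ| - y`.
It is attained by spreading `y` proportionally over the positive parts,
`zᵢ = t · max(δᵢ, 0)` with `t = y / ∑ max(δⱼ, 0) ∈ (0, 1]`: then `zᵢ` lies between `0` and `δᵢ`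
whenever `δᵢ > 0`, so every term of the first inequality is an equality.
-/

open Finset

lemma abs_sub_le_abs_sub_of_nonneg {z d : ℝ} (hz : 0 ≤ z) : |d| - z ≤ |z - d| := by
  simpa [abs_of_nonneg hz, abs_sub_comm] using abs_sub_abs_le_abs_sub d z

lemma abs_mul_max_zero_sub {t d : ℝ} (ht : t ≤ 1) :
    |t * max d 0 - d| = |d| - t * max d 0 := by
  rcases le_or_gt 0 d with hd | hd
  · rw [max_eq_left hd, abs_of_nonneg hd, abs_of_nonpos (by nlinarith)]
    ring
  · rw [max_eq_right hd.le, mul_zero, zero_sub, abs_neg, sub_zero]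

section

variable {ι : Type*} (s : Finset ι) (δ : ι → ℝ)

lemma sum_abs_sub_sum_le_sum_abs_sub {z : ι → ℝ} (hz : ∀ i ∈ s, 0 ≤ z i) :
    ∑ i ∈ s, |δ i| - ∑ i ∈ s, z i ≤ ∑ i ∈ s, |z i - δ i| := by
  rw [← sum_sub_distrib]
  exact sum_le_sum fun i hi => abs_sub_le_abs_sub_of_nonneg (hz i hi)

lemma sum_abs_mul_max_zero_sub {t : ℝ} (ht : t ≤ 1) :
    ∑ i ∈ s, |t * max (δ i) 0 - δ i| = ∑ i ∈ s, |δ i| - t * ∑ i ∈ s, max (δ i) 0 := by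
  simp only [abs_mul_max_zero_sub ht, sum_sub_distrib, mul_sum]

end

/-- If `0 < y ≤ ∑ max(δᵢ,0)`, the minimum of `∑ |yᵢ - δᵢ|` over nonnegative
vectors summing to `y` equals `∑ |δᵢ| - y`. -/
theorem stmt8 (n : ℕ) (y : ℝ) (hy : 0 < y) (δ : ℕ → ℝ)
    (h : y ≤ ∑ i ∈ Finset.Icc 1 n, max (δ i) 0) :
    IsLeast {s : ℝ | ∃ z : ℕ → ℝ, (∀ i ∈ Finset.Icc 1 n, 0 ≤ z i) ∧
        ∑ i ∈ Finset.Icc 1 n, z i = y ∧ s = ∑ i ∈ Finset.Icc 1 n, |z i - δ i|}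
      ((∑ i ∈ Finset.Icc 1 n, |δ i|) - y) := by
  set S := ∑ i ∈ Icc 1 n, max (δ i) 0
  have hS : 0 < S := hy.trans_le h
  have ht₀ : 0 ≤ y / S := div_nonneg hy.le hS.le
  have hyS : y / S * S = y := div_mul_cancel₀ y hS.ne'
  refine ⟨⟨fun i => y / S * max (δ i) 0, fun i _ => mul_nonneg ht₀ (le_max_right _ _),
    by rw [← mul_sum, hyS], ?_⟩, ?_⟩
  · rw [sum_abs_mul_max_zero_sub _ _ ((div_le_one hS).2 h), hyS]
  · rintro _ ⟨z, hz, rfl, rfl⟩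
    exact sum_abs_sub_sum_le_sum_abs_sub _ δ hz
end

section
/- If 0 < y ≤ Σ_{i=1}^n max(δᵢ, 0) and α := y / Σ_{i=1}^n max(δᵢ, 0), then the vector yᵢ* = α·max(δᵢ, 0) is nonnegative, sums to y, satisfies α ∈ (0,1], and achieves Σ_{i=1}^n |yᵢ* - δᵢ| = Σ_{i=1}^n |δᵢ| - y. -/
open Finset

/-! Since `α ≤ 1`, each term `|α δᵢ⁺ - δᵢ|` equals `|δᵢ| - α δᵢ⁺`: it is `(1 - α) δᵢ` when
`δᵢ ≥ 0` and `|δᵢ|` otherwise. Summing gives `∑ |δᵢ| - α ∑ δᵢ⁺ = ∑ |δᵢ| - y`. -/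

lemma abs_mul_max_zero_sub_self {a x : ℝ} (ha : a ≤ 1) :
    |a * max x 0 - x| = |x| - a * max x 0 := by
  rcases le_or_gt 0 x with hx | hx
  · have hax : a * x ≤ x := mul_le_of_le_one_left hx ha
    rw [max_eq_left hx, abs_of_nonneg hx, abs_of_nonpos (sub_nonpos.mpr hax)]
    ring
  · rw [max_eq_right hx.le, mul_zero, zero_sub, abs_neg, sub_zero]

lemma sum_abs_mul_max_zero_sub_self {ι : Type*} (s : Finset ι) (f : ι → ℝ) {a : ℝ}
    (ha : a ≤ 1) :
    ∑ i ∈ s, |a * max (f i) 0 - f i| = ∑ i ∈ s, |f i| - a * ∑ i ∈ s, max (f i) 0 := by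
  rw [mul_sum, ← sum_sub_distrib]
  exact sum_congr rfl fun i _ => abs_mul_max_zero_sub_self ha

/-- If `0 < y ≤ ∑ max(δᵢ,0)` and `α = y / ∑ max(δᵢ,0)`, then
`yᵢ* = α·max(δᵢ,0)` is nonnegative, sums to `y`, `α ∈ (0,1]`, and
`∑ |yᵢ* - δᵢ| = ∑ |δᵢ| - y`. -/
theorem stmt10 (n : ℕ) (y : ℝ) (hy : 0 < y) (δ : ℕ → ℝ)
    (hpos : 0 < ∑ i ∈ Finset.Icc 1 n, max (δ i) 0)
    (h : y ≤ ∑ i ∈ Finset.Icc 1 n, max (δ i) 0)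
    (α : ℝ) (hα : α = y / ∑ i ∈ Finset.Icc 1 n, max (δ i) 0) :
    (∀ i ∈ Finset.Icc 1 n, 0 ≤ α * max (δ i) 0) ∧
    ∑ i ∈ Finset.Icc 1 n, α * max (δ i) 0 = y ∧
    α ∈ Set.Ioc (0 : ℝ) 1 ∧
    ∑ i ∈ Finset.Icc 1 n, |α * max (δ i) 0 - δ i| = (∑ i ∈ Finset.Icc 1 n, |δ i|) - y := by
  have hα_mem : α ∈ Set.Ioc (0 : ℝ) 1 := hα ▸ ⟨div_pos hy hpos, div_le_one_of_le₀ h hpos.le⟩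
  have hα_mul : α * ∑ i ∈ Finset.Icc 1 n, max (δ i) 0 = y := by
    rw [hα, div_mul_cancel₀ _ hpos.ne']
  refine ⟨fun i _ => mul_nonneg hα_mem.1.le (le_max_right _ _), by rw [← mul_sum, hα_mul],
    hα_mem, ?_⟩
  rw [sum_abs_mul_max_zero_sub_self _ _ hα_mem.2, hα_mul]
end

section
/- If 0 < y ≤ Σ_{i=1}^n max(δᵢ, 0), and (y₁,...,yₙ) is a nonnegative vector summing to y with y_j > max(δ_j, 0) for some j, then there exists another nonnegative vector (ỹ₁,...,ỹₙ) summing to y with Σ_{i=1}^n |ỹᵢ - δᵢ| < Σ_{i=1}^n |yᵢ - δᵢ|. -/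
/-!
Since `∑ zᵢ = y ≤ ∑ max(δᵢ, 0)` while `z_j > max(δ_j, 0)`, some `z_k` lies below `max(δ_k, 0)`,
hence (as `z_k ≥ 0`) below `δ_k`. Moving a mass `ε ≤ min(z_j - max(δ_j, 0), δ_k - z_k)` from
coordinate `j` to coordinate `k` keeps the vector nonnegative with the same sum, and brings both
coordinates strictly closer to their targets without overshooting.
-/

open Finset

section Exchange

variable {ι α : Type*}

theorem Finset.exists_lt_of_sum_le_of_lt [AddCommMonoid α] [LinearOrder α]
    [IsOrderedCancelAddMonoid α] {s : Finset ι} {f g : ι → α}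
    (hle : ∑ i ∈ s, f i ≤ ∑ i ∈ s, g i) {j : ι} (hj : j ∈ s) (hgt : g j < f j) :
    ∃ k ∈ s, f k < g k := by
  by_contra! hge
  exact (sum_lt_sum hge ⟨j, hj, hgt⟩).not_ge hle

variable [AddCommGroup α]

theorem Finset.sum_sub_single_add_single [DecidableEq ι] {s : Finset ι} {j k : ι}
    (hj : j ∈ s) (hk : k ∈ s) (z : ι → α) (ε : α) :
    ∑ i ∈ s, (z - Pi.single j ε + Pi.single k ε : ι → α) i = ∑ i ∈ s, z i := by
  simp only [Pi.add_apply, Pi.sub_apply, sum_add_distrib, sum_sub_distrib, sum_pi_single',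
    if_pos hj, if_pos hk, sub_add_cancel]

variable [LinearOrder α] [IsOrderedAddMonoid α]

theorem abs_sub_sub_lt_abs_sub {a d ε : α} (hε : 0 < ε) (h : ε ≤ a - d) :
    |a - ε - d| < |a - d| := by
  rw [sub_right_comm, abs_of_nonneg (sub_nonneg.2 h), abs_of_nonneg (hε.le.trans h)]
  exact sub_lt_self _ hε

theorem abs_add_sub_lt_abs_sub {a d ε : α} (hε : 0 < ε) (h : ε ≤ d - a) :
    |a + ε - d| < |a - d| := by
  rw [← sub_sub_eq_add_sub, abs_sub_comm, abs_sub_comm a d]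
  exact abs_sub_sub_lt_abs_sub hε h

theorem Finset.sum_abs_sub_single_add_single_lt [DecidableEq ι] {s : Finset ι} {j k : ι}
    (hj : j ∈ s) (hjk : j ≠ k) {z δ : ι → α} {ε : α} (hε : 0 < ε)
    (hεj : ε ≤ z j - δ j) (hεk : ε ≤ δ k - z k) :
    ∑ i ∈ s, |(z - Pi.single j ε + Pi.single k ε : ι → α) i - δ i| < ∑ i ∈ s, |z i - δ i| := by
  have hj_lt : |(z - Pi.single j ε + Pi.single k ε : ι → α) j - δ j| < |z j - δ j| := by
    simpa [hjk] using abs_sub_sub_lt_abs_sub hε hεj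
  refine sum_lt_sum (fun i _ => ?_) ⟨j, hj, hj_lt⟩
  rcases eq_or_ne i j with rfl | hij
  · exact hj_lt.le
  rcases eq_or_ne i k with rfl | hik
  · simpa [hij] using (abs_add_sub_lt_abs_sub hε hεk).le
  · simp [hij, hik]

end Exchange

theorem stmt11_general (n : ℕ) (y : ℝ) (δ : ℕ → ℝ)
    (h : y ≤ ∑ i ∈ Finset.Icc 1 n, max (δ i) 0)
    (z : ℕ → ℝ) (hpos : ∀ i ∈ Finset.Icc 1 n, 0 ≤ z i)
    (hsum : ∑ i ∈ Finset.Icc 1 n, z i = y)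
    (j : ℕ) (hj : j ∈ Finset.Icc 1 n) (hbig : max (δ j) 0 < z j) :
    ∃ w : ℕ → ℝ, (∀ i ∈ Finset.Icc 1 n, 0 ≤ w i) ∧
      ∑ i ∈ Finset.Icc 1 n, w i = y ∧
      ∑ i ∈ Finset.Icc 1 n, |w i - δ i| < ∑ i ∈ Finset.Icc 1 n, |z i - δ i| := by
  obtain ⟨k, hk, hsmall⟩ := exists_lt_of_sum_le_of_lt (g := fun i => max (δ i) 0)
    (hsum.trans_le h) hj hbig
  have hjk : j ≠ k := by rintro rfl; exact hsmall.not_gt hbig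
  have hzδk : z k < δ k := (lt_max_iff.mp hsmall).resolve_right (hpos k hk).not_gt
  let ε := min (z j - max (δ j) 0) (δ k - z k)
  have hε : 0 < ε := lt_min (sub_pos.mpr hbig) (sub_pos.mpr hzδk)
  have hεj : ε ≤ z j - max (δ j) 0 := min_le_left _ _
  refine ⟨z - Pi.single j ε + Pi.single k ε, fun i hi => ?_, ?_, ?_⟩
  · rcases eq_or_ne i j with rfl | hij
    · simp only [Pi.add_apply, Pi.sub_apply, Pi.single_eq_same, Pi.single_eq_of_ne hjk, add_zero]
      linarith [le_max_right (δ i) 0]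
    · simp only [Pi.add_apply, Pi.sub_apply, Pi.single_eq_of_ne hij, sub_zero]
      exact add_nonneg (hpos i hi) (by rw [Pi.single_apply]; split_ifs <;> positivity)
  · exact (sum_sub_single_add_single hj hk z ε).trans hsum
  · exact sum_abs_sub_single_add_single_lt (δ := δ) hj hjk hε
      (hεj.trans (sub_le_sub_left (le_max_left _ _) _)) (min_le_right _ _)

/-- If `0 < y ≤ ∑ max(δᵢ,0)` and a nonnegative vector summing to `y` has
`y_j > max(δ_j,0)` for some `j`, then some other nonnegative vector summing to `y` strictly
decreases `∑ |yᵢ - δᵢ|`. -/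
theorem stmt11 (n : ℕ) (y : ℝ) (hy : 0 < y) (δ : ℕ → ℝ)
    (h : y ≤ ∑ i ∈ Finset.Icc 1 n, max (δ i) 0)
    (z : ℕ → ℝ) (hpos : ∀ i ∈ Finset.Icc 1 n, 0 ≤ z i)
    (hsum : ∑ i ∈ Finset.Icc 1 n, z i = y)
    (j : ℕ) (hj : j ∈ Finset.Icc 1 n) (hbig : max (δ j) 0 < z j) :
    ∃ w : ℕ → ℝ, (∀ i ∈ Finset.Icc 1 n, 0 ≤ w i) ∧
      ∑ i ∈ Finset.Icc 1 n, w i = y ∧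
      ∑ i ∈ Finset.Icc 1 n, |w i - δ i| < ∑ i ∈ Finset.Icc 1 n, |z i - δ i| :=
  stmt11_general n y δ h z hpos hsum j hj hbig
end

section
/- If y > Σ_{i=1}^n max(δᵢ, 0), and (y₁,...,yₙ) is a nonnegative vector summing to y with y_j < max(δ_j, 0) for some j, then there exists a nonnegative vector (ỹ₁,...,ỹₙ) summing to y with Σ_{i=1}^n |ỹᵢ - δᵢ| < Σ_{i=1}^n |yᵢ - δᵢ|. -/
/-!
Since `∑ zᵢ = y > ∑ max(δᵢ, 0)`, some coordinate `k` has `z_k > max(δ_k, 0)`, while `z_j < δ_j`.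
Moving a small mass `ε` from `k` to `j` keeps the vector nonnegative with the same sum, and moves
both `z_j` and `z_k` strictly towards `δ_j` and `δ_k` without overshooting, so every term
`|zᵢ - δᵢ|` weakly decreases and the `j`-th one strictly.
-/

open Finset

lemma abs_sub_lt_abs_sub_of_lt_of_le {a b c : ℝ} (hab : a < b) (hbc : b ≤ c) :
    |b - c| < |a - c| := by
  rw [abs_of_nonpos (by linarith), abs_of_neg (by linarith)]
  linarith

lemma abs_sub_lt_abs_sub_of_le_of_lt {a b c : ℝ} (hcb : c ≤ b) (hba : b < a) :
    |b - c| < |a - c| := by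
  rw [abs_of_nonneg (by linarith), abs_of_pos (by linarith)]
  linarith

section Transfer

variable {ι : Type*} [DecidableEq ι] {s : Finset ι} {z δ : ι → ℝ} {j k : ι} {ε : ℝ}

lemma sum_add_single_sub_single (hj : j ∈ s) (hk : k ∈ s) :
    ∑ i ∈ s, (z + Pi.single j ε - Pi.single k ε : ι → ℝ) i = ∑ i ∈ s, z i := by
  simp only [Pi.add_apply, Pi.sub_apply, sum_sub_distrib, sum_add_distrib, sum_pi_single', hj, hk,
    if_true, add_sub_cancel_right]

lemma add_single_sub_single_nonneg (hz : ∀ i ∈ s, 0 ≤ z i) (hjk : j ≠ k) (hε : 0 ≤ ε)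
    (hεk : ε ≤ z k) {i : ι} (hi : i ∈ s) : 0 ≤ (z + Pi.single j ε - Pi.single k ε : ι → ℝ) i := by
  simp only [Pi.add_apply, Pi.sub_apply, Pi.single_apply]
  split_ifs with hij hik hik <;> subst_vars <;> linarith [hz i hi]

lemma sum_abs_sub_add_single_sub_single_lt (hj : j ∈ s) (hjk : j ≠ k) (hε : 0 < ε)
    (hεj : z j + ε ≤ δ j) (hεk : δ k ≤ z k - ε) :
    ∑ i ∈ s, |(z + Pi.single j ε - Pi.single k ε : ι → ℝ) i - δ i| < ∑ i ∈ s, |z i - δ i| := by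
  have at_j : |(z + Pi.single j ε - Pi.single k ε : ι → ℝ) j - δ j| < |z j - δ j| := by
    simp only [Pi.add_apply, Pi.sub_apply, Pi.single_eq_same, Pi.single_eq_of_ne hjk, sub_zero]
    exact abs_sub_lt_abs_sub_of_lt_of_le (by linarith) hεj
  refine sum_lt_sum (fun i _ => ?_) ⟨j, hj, at_j⟩
  by_cases hij : i = j
  · exact hij ▸ at_j.le
  by_cases hik : i = k
  · subst hik
    simp only [Pi.add_apply, Pi.sub_apply, Pi.single_eq_same, Pi.single_eq_of_ne hij, add_zero]
    exact (abs_sub_lt_abs_sub_of_le_of_lt hεk (by linarith)).le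
  · simp [hij, hik]

end Transfer

/-- If `y > ∑ max(δᵢ,0)` and a nonnegative vector summing to `y` has
`y_j < max(δ_j,0)` for some `j`, then some nonnegative vector summing to `y` strictly
decreases `∑ |yᵢ - δᵢ|`. -/
theorem stmt12 (n : ℕ) (y : ℝ) (δ : ℕ → ℝ)
    (h : ∑ i ∈ Finset.Icc 1 n, max (δ i) 0 < y)
    (z : ℕ → ℝ) (hpos : ∀ i ∈ Finset.Icc 1 n, 0 ≤ z i)
    (hsum : ∑ i ∈ Finset.Icc 1 n, z i = y)
    (j : ℕ) (hj : j ∈ Finset.Icc 1 n) (hsmall : z j < max (δ j) 0) :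
    ∃ w : ℕ → ℝ, (∀ i ∈ Finset.Icc 1 n, 0 ≤ w i) ∧
      ∑ i ∈ Finset.Icc 1 n, w i = y ∧
      ∑ i ∈ Finset.Icc 1 n, |w i - δ i| < ∑ i ∈ Finset.Icc 1 n, |z i - δ i| := by
  obtain ⟨k, hk, hbig⟩ := exists_lt_of_sum_lt (hsum ▸ h)
  have hjδ : z j < δ j := (lt_max_iff.1 hsmall).resolve_right (hpos j hj).not_gt
  have hjk : j ≠ k := by
    rintro rfl
    exact (hsmall.trans hbig).false
  obtain ⟨ε, hε, hεj, hεk⟩ : ∃ ε > 0, z j + ε ≤ δ j ∧ max (δ k) 0 ≤ z k - ε :=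
    ⟨min (δ j - z j) (z k - max (δ k) 0), lt_min (by linarith) (by linarith),
      by linarith [min_le_left (δ j - z j) (z k - max (δ k) 0)],
      by linarith [min_le_right (δ j - z j) (z k - max (δ k) 0)]⟩
  obtain ⟨hδk, hzk⟩ := max_le_iff.1 hεk
  refine ⟨z + Pi.single j ε - Pi.single k ε,
    fun i hi => add_single_sub_single_nonneg hpos hjk hε.le (by linarith) hi,
    (sum_add_single_sub_single hj hk).trans hsum, ?_⟩
  exact sum_abs_sub_add_single_sub_single_lt hj hjk hε hεj hδk
end

section
/- With g and κ as defined, g is differentiable at every λ with derivative g'(λ) = -2κ(λ)λ + 2(Σ_{i ≤ κ(λ)} δᵢ - y), including at the points λ = δ_j where κ has jumps. -/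
/-!
Since `δ` is nonincreasing, `δᵢ > λ` holds exactly for `i ≤ κ(λ)`, and expanding the squares gives
`g(λ) = ∑ᵢ δᵢ² - ∑ᵢ ((δᵢ - λ)⁺)² - 2λy`. The jumps of `κ` thus disappear: `t ↦ (t⁺)²` is
differentiable everywhere with derivative `2t⁺`, and `2∑ᵢ (δᵢ - λ)⁺ - 2y` is the claimed derivative.
-/

open Finset

theorem hasDerivAt_max_zero_sq (x : ℝ) :
    HasDerivAt (fun t : ℝ => max t 0 ^ 2) (2 * max x 0) x := by
  refine hasDerivAt_of_hasDerivAt_of_ne' (f := fun t : ℝ => max t 0 ^ 2)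
    (g := fun t => 2 * max t 0) (x := 0) (fun y hy => ?_) (by fun_prop) (by fun_prop) x
  rcases hy.lt_or_gt with hy | hy
  · have hloc : (fun t : ℝ => max t 0 ^ 2) =ᶠ[nhds y] fun _ => 0 := by
      filter_upwards [eventually_lt_nhds hy] with t ht
      simp [max_eq_right ht.le]
    simpa [max_eq_right hy.le] using (hasDerivAt_const y (0 : ℝ)).congr_of_eventuallyEq hloc
  · have hloc : (fun t : ℝ => max t 0 ^ 2) =ᶠ[nhds y] fun t => t ^ 2 := by
      filter_upwards [eventually_gt_nhds hy] with t ht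
      simp [max_eq_left ht.le]
    simpa [max_eq_left hy.le] using (hasDerivAt_pow 2 y).congr_of_eventuallyEq hloc

theorem sum_Icc_one_add_sum_Icc_succ {M : Type*} [AddCommMonoid M] (f : ℕ → M) {k n : ℕ}
    (hkn : k ≤ n) : ∑ i ∈ Icc 1 k, f i + ∑ i ∈ Icc (k + 1) n, f i = ∑ i ∈ Icc 1 n, f i := by
  have := sum_Ioc_consecutive f (Nat.zero_le k) hkn
  rwa [← Icc_add_one_left_eq_Ioc, ← Icc_add_one_left_eq_Ioc, ← Icc_add_one_left_eq_Ioc,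
    zero_add] at this

theorem filter_Icc_one_eq_Icc_card {p : ℕ → Prop} [DecidablePred p] {n : ℕ}
    (hp : ∀ i j, 1 ≤ i → i ≤ j → j ≤ n → p j → p i) :
    {i ∈ Icc 1 n | p i} = Icc 1 #{i ∈ Icc 1 n | p i} := by
  set s := {i ∈ Icc 1 n | p i}
  have hsub : s ⊆ Icc 1 #s := by
    intro j hj
    obtain ⟨hj, hpj⟩ := mem_filter.mp hj
    rw [mem_Icc] at hj ⊢
    have hIcc : Icc 1 j ⊆ s := fun i hi => by
      rw [mem_Icc] at hi
      exact mem_filter.mpr ⟨mem_Icc.mpr ⟨hi.1, hi.2.trans hj.2⟩, hp i j hi.1 hi.2 hj.2 hpj⟩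
    exact ⟨hj.1, by simpa using card_le_card hIcc⟩
  exact eq_of_subset_of_card_le hsub (by simp)

theorem sum_Icc_comp_posPart_sub {n : ℕ} {δ : ℕ → ℝ}
    (hδ : ∀ i j, 1 ≤ i → i ≤ j → j ≤ n → δ j ≤ δ i) {f : ℝ → ℝ} (hf : f 0 = 0) (l : ℝ) :
    ∑ i ∈ Icc 1 n, f (max (δ i - l) 0) = ∑ i ∈ Icc 1 #{i ∈ Icc 1 n | l < δ i}, f (δ i - l) := by
  rw [← filter_Icc_one_eq_Icc_card fun i j hi hij hj h => h.trans_le (hδ i j hi hij hj)]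
  rw [← sum_filter_of_ne (p := fun i => l < δ i) fun i _ hi => ?_]
  · exact sum_congr rfl fun i hi => by rw [max_eq_left (sub_pos.mpr (mem_filter.mp hi).2).le]
  · by_contra h
    exact hi (by rw [max_eq_right (sub_nonpos.mpr (not_lt.mp h)), hf])

theorem stmt16_general (n : ℕ) (y : ℝ) (δ : ℕ → ℝ)
    (hδ : ∀ i j, 1 ≤ i → i ≤ j → j ≤ n → δ j ≤ δ i)
    (κ : ℝ → ℕ) (hκ : ∀ l, κ l = ((Finset.Icc 1 n).filter (fun i => l < δ i)).card)
    (g : ℝ → ℝ)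
    (hg : ∀ l, g l = -(κ l : ℝ) * l ^ 2 +
        2 * l * ((∑ i ∈ Finset.Icc 1 (κ l), δ i) - y) +
        ∑ i ∈ Finset.Icc (κ l + 1) n, (δ i) ^ 2) :
    ∀ l : ℝ, HasDerivAt g (-2 * (κ l : ℝ) * l + 2 * ((∑ i ∈ Finset.Icc 1 (κ l), δ i) - y)) l := by
  have hκn (l : ℝ) : κ l ≤ n := hκ l ▸ (card_filter_le _ _).trans (by simp)
  have hg_eq :
      g = fun l => ∑ i ∈ Icc 1 n, δ i ^ 2 - ∑ i ∈ Icc 1 n, max (δ i - l) 0 ^ 2 - 2 * l * y := by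
    funext l
    rw [hg, sum_Icc_comp_posPart_sub hδ (f := (· ^ 2)) (zero_pow two_ne_zero) l, ← hκ,
      ← sum_Icc_one_add_sum_Icc_succ _ (hκn l)]
    simp only [sub_sq, sum_add_distrib, sum_sub_distrib, ← mul_sum, ← sum_mul, sum_const,
      Nat.card_Icc, add_tsub_cancel_right, nsmul_eq_mul]
    ring
  intro l
  have hsum := HasDerivAt.fun_sum fun i (_ : i ∈ Icc 1 n) =>
    (hasDerivAt_max_zero_sq (δ i - l)).comp l ((hasDerivAt_id l).const_sub (δ i))
  rw [hg_eq]
  refine (((hasDerivAt_const l _).fun_sub hsum).fun_sub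
    (((hasDerivAt_id' l).const_mul 2).mul_const y)).congr_deriv ?_
  rw [sum_Icc_comp_posPart_sub hδ (f := fun t => 2 * t * -1) (by ring) l, ← hκ]
  simp only [mul_neg_one, mul_sub, sum_neg_distrib, sum_sub_distrib, ← mul_sum, sum_const,
    Nat.card_Icc, add_tsub_cancel_right, nsmul_eq_mul]
  ring

/-- With `κ` and `g` as defined, `g` is differentiable at every `λ ∈ ℝ` with
derivative `g'(λ) = -2κ(λ)λ + 2(∑_{i ≤ κ(λ)} δᵢ - y)`, including at the jump points
`λ = δ_j`. -/
theorem stmt16 (n : ℕ) (y : ℝ) (hy : 0 < y) (δ : ℕ → ℝ)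
    (hδ : ∀ i j, 1 ≤ i → i ≤ j → j ≤ n → δ j ≤ δ i)
    (κ : ℝ → ℕ) (hκ : ∀ l, κ l = ((Finset.Icc 1 n).filter (fun i => l < δ i)).card)
    (g : ℝ → ℝ)
    (hg : ∀ l, g l = -(κ l : ℝ) * l ^ 2 +
        2 * l * ((∑ i ∈ Finset.Icc 1 (κ l), δ i) - y) +
        ∑ i ∈ Finset.Icc (κ l + 1) n, (δ i) ^ 2) :
    ∀ l : ℝ, HasDerivAt g (-2 * (κ l : ℝ) * l + 2 * ((∑ i ∈ Finset.Icc 1 (κ l), δ i) - y)) l :=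
  stmt16_general n y δ hδ κ hκ g hg
end
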